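/- arXiv:2409.06799 — 8 statements merged into one kernel-verified Lean document; each statement's English description precedes it below -/
import Mathlib

section
/- Let A be a unital C*-algebra and let a, b ∈ A. If the commutator c = ab − ba commutes with every element of A (i.e. c lies in the centre of A), then c = 0. -/
/-!
With `c = ⁅a, b⁆` central and `D = ⁅a, ·⁆`, the Leibniz rule gives `D^[n] (b ^ n) = n! • c ^ n`,
and `‖D x‖ ≤ 2‖a‖‖x‖` then yields `n! ‖c ^ n‖ ≤ (2‖a‖‖b‖) ^ n`: the commutator is quasinilpotent.
Being central, `c` is normal, so its norm equals its spectral radius, which is `0`.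
-/

open Filter Topology
open scoped Nat

section Ring

variable {R : Type*} [Ring R]

theorem lie_pow_succ_of_commute {a b : R} (hb : Commute b ⁅a, b⁆) (n : ℕ) :
    ⁅a, b ^ (n + 1)⁆ = (n + 1) • (⁅a, b⁆ * b ^ n) := by
  induction n with
  | zero => simp
  | succ n ih =>
    have leibniz : ⁅a, b ^ (n + 1) * b⁆ = ⁅a, b ^ (n + 1)⁆ * b + b ^ (n + 1) * ⁅a, b⁆ := by
      simp only [Ring.lie_def]; noncomm_ring
    rw [pow_succ _ (n + 1), leibniz, ih, smul_mul_assoc, mul_assoc, ← pow_succ,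
      (hb.pow_left (n + 1)).eq, succ_nsmul _ (n + 1)]

theorem iterate_lie_mul_left_of_commute {a c : R} (hc : Commute a c) (n : ℕ) (x : R) :
    (⁅a, ·⁆)^[n] (c * x) = c * (⁅a, ·⁆)^[n] x := by
  have : Function.Commute (⁅a, ·⁆) (c * ·) := fun y => by
    simp only [Ring.lie_def, mul_sub, ← mul_assoc, hc.eq]
  exact (this.iterate_left n) x

theorem iterate_lie_nsmul (a : R) (n k : ℕ) (x : R) :
    (⁅a, ·⁆)^[n] (k • x) = k • (⁅a, ·⁆)^[n] x := by
  have : Function.Commute (⁅a, ·⁆) (k • · : R → R) := fun y => by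
    simp only [Ring.lie_def, smul_sub, mul_smul_comm, smul_mul_assoc]
  exact (this.iterate_left n) x

/-- The Kleinecke–Shirokov identity. -/
theorem iterate_lie_pow_of_commute {a b : R} (ha : Commute a ⁅a, b⁆) (hb : Commute b ⁅a, b⁆)
    (n : ℕ) : (⁅a, ·⁆)^[n] (b ^ n) = n ! • ⁅a, b⁆ ^ n := by
  induction n with
  | zero => simp
  | succ n ih =>
    rw [Function.iterate_succ_apply, lie_pow_succ_of_commute hb, iterate_lie_nsmul,
      iterate_lie_mul_left_of_commute ha, ih, Nat.factorial_succ, mul_smul, mul_smul_comm,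
      pow_succ' _ n]

end Ring

section NormedRing

variable {R : Type*} [NormedRing R]

theorem norm_lie_le (a x : R) : ‖⁅a, x⁆‖ ≤ 2 * ‖a‖ * ‖x‖ :=
  calc ‖a * x - x * a‖ ≤ ‖a * x‖ + ‖x * a‖ := norm_sub_le _ _
    _ ≤ ‖a‖ * ‖x‖ + ‖x‖ * ‖a‖ := add_le_add (norm_mul_le _ _) (norm_mul_le _ _)
    _ = 2 * ‖a‖ * ‖x‖ := by ring

theorem norm_iterate_lie_le (a : R) (n : ℕ) (x : R) :
    ‖(⁅a, ·⁆)^[n] x‖ ≤ (2 * ‖a‖) ^ n * ‖x‖ := by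
  induction n with
  | zero => simp
  | succ n ih =>
    rw [Function.iterate_succ_apply', pow_succ', mul_assoc]
    exact (norm_lie_le _ _).trans (by gcongr)

theorem factorial_mul_norm_lie_pow_le [NormedAlgebra ℝ R] {a b : R} (ha : Commute a ⁅a, b⁆)
    (hb : Commute b ⁅a, b⁆) {n : ℕ} (hn : 0 < n) : n ! * ‖⁅a, b⁆ ^ n‖ ≤ (2 * ‖a‖ * ‖b‖) ^ n := by
  have h := norm_iterate_lie_le a n (b ^ n)
  rw [iterate_lie_pow_of_commute ha hb, ← Nat.cast_smul_eq_nsmul ℝ, norm_smul,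
    Real.norm_natCast] at h
  calc n ! * ‖⁅a, b⁆ ^ n‖ ≤ (2 * ‖a‖) ^ n * ‖b ^ n‖ := h
    _ ≤ (2 * ‖a‖) ^ n * ‖b‖ ^ n := by gcongr; exact norm_pow_le' b hn
    _ = (2 * ‖a‖ * ‖b‖) ^ n := (mul_pow _ _ _).symm

end NormedRing

theorem spectralRadius_eq_zero_of_factorial_mul_norm_pow_le {𝕜 A : Type*}
    [NontriviallyNormedField 𝕜] [NormedRing A] [NormedAlgebra 𝕜 A] [CompleteSpace A]
    {x : A} {M : ℝ} (h : ∀ n, 0 < n → n ! * ‖x ^ n‖ ≤ M ^ n) : spectralRadius 𝕜 x = 0 := by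
  refine le_antisymm (iSup₂_le fun k hk => ?_) zero_le
  suffices k = 0 by simp [this]
  by_contra hk0
  have hk_pos : 0 < ‖k‖ := norm_pos_iff.mpr hk0
  have h_ge : ∀ n, 0 < n → 1 ≤ (M / ‖k‖) ^ n / n ! * ‖(1 : A)‖ := fun n hn => by
    have h_spec : ‖k‖ ^ n ≤ ‖x ^ n‖ * ‖(1 : A)‖ := by
      simpa using spectrum.norm_le_norm_mul_of_mem (spectrum.pow_mem_pow x n hk)
    rw [div_pow, div_div, div_mul_eq_mul_div, one_le_div (by positivity)]
    calc ‖k‖ ^ n * n ! = n ! * ‖k‖ ^ n := mul_comm _ _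
      _ ≤ n ! * (‖x ^ n‖ * ‖(1 : A)‖) := by gcongr
      _ = n ! * ‖x ^ n‖ * ‖(1 : A)‖ := (mul_assoc _ _ _).symm
      _ ≤ M ^ n * ‖(1 : A)‖ := by gcongr; exact h n hn
  have h_lim : Tendsto (fun n : ℕ => (M / ‖k‖) ^ n / n ! * ‖(1 : A)‖) atTop (𝓝 0) := by
    simpa using (FloorSemiring.tendsto_pow_div_factorial_atTop (M / ‖k‖)).mul_const ‖(1 : A)‖
  obtain ⟨n, h_lt, hn⟩ := ((h_lim.eventually (eventually_lt_nhds one_pos)).and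
    (eventually_gt_atTop 0)).exists
  exact (h_ge n hn).not_gt h_lt

/-- In a unital C*-algebra, a commutator ab − ba lying in the centre is zero. -/
theorem central_commutator_eq_zero {A : Type*} [NormedRing A] [StarRing A] [CStarRing A]
    [CompleteSpace A] [NormedAlgebra ℂ A] [StarModule ℂ A] (a b : A)
    (h : ∀ z : A, (a * b - b * a) * z = z * (a * b - b * a)) :
    a * b - b * a = 0 := by
  let : CStarAlgebra A := {}
  have h_central (z : A) : Commute z ⁅a, b⁆ := (h z).symm
  have : IsStarNormal ⁅a, b⁆ := ⟨h_central _⟩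
  have h_rad : spectralRadius ℂ ⁅a, b⁆ = 0 :=
    spectralRadius_eq_zero_of_factorial_mul_norm_pow_le fun _ hn =>
      factorial_mul_norm_lie_pow_le (h_central a) (h_central b) hn
  rw [IsStarNormal.spectralRadius_eq_nnnorm, ENNReal.coe_eq_zero, nnnorm_eq_zero] at h_rad
  exact h_rad
end

section
/- Let A be a unital associative algebra, let J be a Jordan algebra, and let φ : J → A be a unital Jordan homomorphism (φ(x∘y) = (φ(x)φ(y)+φ(y)φ(x))/2). Let p, q ∈ J be idempotents (p∘p = p, q∘q = q) with p∘q = 0 and U_q(p) = 0, where U_q(x) := 2 q∘(q∘x) − (q∘q)∘x. Then φ(p)φ(q) = 0 and φ(q)φ(p) = 0 in A. -/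
/-- If φ is a unital Jordan homomorphism from a unital Jordan algebra J into a unital
associative algebra A, and p, q are idempotents of J with p∘q = 0 and U_q(p) = 0,
then φ(p)φ(q) = 0 = φ(q)φ(p) in A. -/
theorem jordan_hom_orthogonal_idempotents {K : Type*} [Field K] (h2 : (2 : K) ≠ 0)
    {J A : Type*} [NonAssocRing J] [Module K J] [IsScalarTower K J J] [SMulCommClass K J J]
    (hcomm : ∀ x y : J, x * y = y * x)
    [Ring A] [Algebra K A]
    (φ : J →ₗ[K] A) (hφ1 : φ 1 = 1)
    (hφmul : ∀ x y : J, (2 : K) • φ (x * y) = φ x * φ y + φ y * φ x)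
    (p q : J) (hp : p * p = p) (hq : q * q = q) (hpq : p * q = 0)
    (hU : (2 : K) • (q * (q * p)) - (q * q) * p = 0) :
    φ p * φ q = 0 ∧ φ q * φ p = 0 := by
  set P := φ p with hP
  set Q := φ q with hQ
  have hinj : Function.Injective (fun a : A => (2 : K) • a) :=
    smul_right_injective A h2
  have hPP : P * P = P := by
    have h := hφmul p p
    rw [hp] at h
    have : (2 : K) • (P * P) = (2 : K) • P := by
      rw [two_smul]; exact h.symm
    exact hinj this
  have hanti : P * Q + Q * P = 0 := by
    have h := hφmul p q
    rw [hpq, map_zero, smul_zero] at h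
    exact h.symm
  -- multiply hanti on the left and right by P
  have h1 : P * Q + P * (Q * P) = 0 := by
    have := congrArg (fun a => P * a) hanti
    simpa [mul_add, ← mul_assoc, hPP] using this
  have h2' : P * (Q * P) + Q * P = 0 := by
    have := congrArg (fun a => a * P) hanti
    simpa [add_mul, mul_assoc, hPP] using this
  have hcommPQ : P * Q = Q * P := by
    have h3 : P * Q + P * (Q * P) = P * (Q * P) + Q * P := h1.trans h2'.symm
    have := add_right_cancel (a := P * Q) (b := P * (Q * P)) (c := Q * P)
      (by rw [add_comm (P * (Q * P)) (Q * P)] at h3; exact h3)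
    exact this
  have hPQ : P * Q = 0 := by
    have h4 : (2 : K) • (P * Q) = 0 := by
      rw [two_smul]
      calc P * Q + P * Q = P * Q + Q * P := by rw [hcommPQ]
        _ = 0 := hanti
    have := hinj (a₁ := P * Q) (a₂ := 0) (by simpa using h4)
    simpa using this
  exact ⟨hPQ, by rw [← hcommPQ]; exact hPQ⟩
end

section
/- Let A be a unital associative algebra over a field of characteristic ≠ 2, let J be a unital Jordan algebra, and let φ : J → A be a unital Jordan homomorphism. Let s ∈ J with s∘s = 1 and let p ∈ J with U_s(p) = q, where U_s(x) = 2s∘(s∘x) − x. Then φ(s)φ(p) = φ(q)φ(s) and φ(p)φ(s) = φ(s)φ(q) in A. -/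
/-- If φ is a unital Jordan homomorphism from a unital Jordan algebra J into a unital
associative algebra A, s is a symmetry (s² = 1) and U_s(p) = q, then
φ(s)φ(p) = φ(q)φ(s) and φ(p)φ(s) = φ(s)φ(q). -/
theorem jordan_hom_symmetry_exchange {K : Type*} [Field K] (h2 : (2 : K) ≠ 0)
    {J A : Type*} [NonAssocRing J] [Module K J] [IsScalarTower K J J] [SMulCommClass K J J]
    (hcomm : ∀ x y : J, x * y = y * x)
    [Ring A] [Algebra K A]
    (φ : J →ₗ[K] A) (hφ1 : φ 1 = 1)
    (hφmul : ∀ x y : J, (2 : K) • φ (x * y) = φ x * φ y + φ y * φ x)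
    (s p q : J) (hs : s * s = 1)
    (hU : (2 : K) • (s * (s * p)) - p = q) :
    φ s * φ p = φ q * φ s ∧ φ p * φ s = φ s * φ q := by
  have cancel : ∀ a b : A, (2:K) • a = (2:K) • b → a = b := by
    intro a b h
    have h' := congrArg (fun x => (2:K)⁻¹ • x) h
    simpa [smul_smul, inv_mul_cancel₀ h2] using h'
  have hS : φ s * φ s = 1 := by
    have h := hφmul s s
    rw [hs, hφ1] at h
    exact cancel _ _ (by rw [two_smul]; exact h.symm)
  set S := φ s with hSdef
  set P := φ p with hPdef
  have h1 : (2:K) • φ (s * p) = S * P + P * S := hφmul s p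
  have h2' : (2:K) • φ (s * (s * p)) = S * φ (s * p) + φ (s * p) * S := hφmul s (s*p)
  have key : (2:K) • φ (s * (s * p)) = P + S * P * S := by
    apply cancel
    calc (2:K) • ((2:K) • φ (s*(s*p)))
        = (2:K) • (S * φ (s*p) + φ (s*p) * S) := by rw [h2']
      _ = S * ((2:K) • φ (s*p)) + ((2:K) • φ (s*p)) * S := by
          rw [smul_add, mul_smul_comm, smul_mul_assoc]
      _ = S * (S*P + P*S) + (S*P + P*S) * S := by rw [h1]
      _ = (S*S)*P + S*P*S + (S*P*S + P*(S*S)) := by noncomm_ring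
      _ = (2:K) • (P + S*P*S) := by rw [hS, two_smul]; noncomm_ring
  have hq : φ q = S * P * S := by
    rw [← hU, map_sub, map_smul, key]; abel
  constructor
  · rw [hq]
    calc S * P = S * P * (S * S) := by rw [hS, mul_one]
      _ = S * P * S * S := by noncomm_ring
  · rw [hq]
    calc P * S = (S*S) * (P * S) := by rw [hS, one_mul]
      _ = S * (S * P * S) := by noncomm_ring
end

section
/- Let J be a unital Jordan algebra over a field of characteristic ≠ 2, and let T : J → J be a linear map such that [T(x), a, x] = 0 for all x, a ∈ J (T is associating), where [u,a,v] = (u∘a)∘v − (v∘a)∘u. Then [T(x), a, y] = −[T(y), a, x] for all x, y, a ∈ J. Moreover, if p is a central idempotent of J (i.e. [p, J, J] = 0 and p∘p = p) and q := 1 − p, then for every x ∈ J the element q∘T(p∘x) is central: [q∘T(p∘x), a, y] = 0 for all a, y ∈ J. -/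
/-- For an associating linear map T on a unital Jordan algebra J (char ≠ 2):
[T(x), a, y] = −[T(y), a, x], and for every central idempotent p with q = 1 − p,
the element q∘T(p∘x) is central. -/
theorem associating_linear_map_identities {K : Type*} [Field K] (h2 : (2 : K) ≠ 0)
    {J : Type*} [NonAssocRing J] [Module K J] [IsScalarTower K J J] [SMulCommClass K J J]
    (hcomm : ∀ x y : J, x * y = y * x)
    (T : J →ₗ[K] J)
    (hT : ∀ (x a : J), (T x * a) * x - (x * a) * T x = 0) :
    (∀ x y a : J,
        (T x * a) * y - (y * a) * T x = -((T y * a) * x - (x * a) * T y)) ∧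
    (∀ p : J, p * p = p → (∀ a y : J, (p * a) * y - (y * a) * p = 0) →
        ∀ x a y : J,
          (((1 - p) * T (p * x)) * a) * y - (y * a) * ((1 - p) * T (p * x)) = 0) := by
  have part1 : ∀ x y a : J,
      (T x * a) * y - (y * a) * T x = -((T y * a) * x - (x * a) * T y) := by
    intro x y a
    have h1 := hT (x + y) a
    simp only [map_add, add_mul, mul_add] at h1
    have key : ((T x * a) * y - (y * a) * T x) + ((T y * a) * x - (x * a) * T y) = 0 := by
      linear_combination (norm := abel) h1 - hT x a - hT y a
    exact eq_neg_of_add_eq_zero_left key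
  refine ⟨part1, ?_⟩
  intro p hp hc x a y
  -- p is "nuclear": (p*a)*y = p*(a*y)
  have hpn : ∀ a y : J, (p * a) * y = p * (a * y) := by
    intro a y
    calc (p * a) * y = (y * a) * p := sub_eq_zero.mp (hc a y)
      _ = p * (y * a) := hcomm _ _
      _ = p * (a * y) := by rw [hcomm y a]
  -- hence so is q = 1 - p
  have hqn : ∀ a y : J, ((1 - p) * a) * y = (1 - p) * (a * y) := by
    intro a y
    rw [sub_mul, one_mul, sub_mul, hpn, sub_mul, one_mul]
  have hqp : (1 - p) * p = 0 := by
    rw [sub_mul, one_mul, hp, sub_self]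
  set w := T (p * x) with hw
  -- pull the factor (1 - p) out of the associator
  have hA : (((1 - p) * w) * a) * y - (y * a) * ((1 - p) * w)
      = (1 - p) * ((w * a) * y - (y * a) * w) := by
    have e1 : (((1 - p) * w) * a) * y = (1 - p) * ((w * a) * y) := by
      rw [hqn w a, hqn (w * a) y]
    have e2 : (y * a) * ((1 - p) * w) = (1 - p) * ((y * a) * w) := by
      rw [hcomm (y * a) ((1 - p) * w), hqn w (y * a), hcomm w (y * a)]
    rw [e1, e2, mul_sub]
  rw [hA]
  -- use part 1 to move p out front, then q * p = 0
  have h₁ : (w * a) * y - (y * a) * w = -((T y * a) * (p * x) - ((p * x) * a) * T y) :=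
    part1 (p * x) y a
  have h₂ : (T y * a) * (p * x) - ((p * x) * a) * T y
      = p * ((T y * a) * x - (x * a) * T y) := by
    have e1 : (T y * a) * (p * x) = p * ((T y * a) * x) := by
      rw [hcomm (T y * a) (p * x), hpn x (T y * a), hcomm x (T y * a)]
    have e2 : ((p * x) * a) * T y = p * ((x * a) * T y) := by
      rw [hpn x a, hpn (x * a) (T y)]
    rw [e1, e2, mul_sub]
  rw [h₁, h₂, mul_neg, ← hqn, hqp, zero_mul, neg_zero]
end

section
/- Let J be a unital Jordan algebra over a field of characteristic ≠ 2, let p be a central idempotent with q := 1 − p, and let B : J × J → J be a symmetric bilinear map such that [B(x,x), a, x] = 0 for all x, a ∈ J. Then for every x ∈ J the element p∘B(q∘x, q∘x) is central in J. -/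
/-- If B is a symmetric bilinear map on a unital Jordan algebra J with associating trace,
and p is a central idempotent with q = 1 − p, then p∘B(q∘x, q∘x) is central. -/
theorem associating_trace_central_corner {K : Type*} [Field K] (h2 : (2 : K) ≠ 0)
    {J : Type*} [NonAssocRing J] [Module K J] [IsScalarTower K J J] [SMulCommClass K J J]
    (hcomm : ∀ x y : J, x * y = y * x)
    (B : J →ₗ[K] J →ₗ[K] J)
    (hBsymm : ∀ x y : J, B x y = B y x)
    (hB : ∀ (x a : J), (B x x * a) * x - (x * a) * B x x = 0)
    (p : J) (hp : p * p = p)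
    (hpc : ∀ a y : J, (p * a) * y - (y * a) * p = 0) :
    ∀ x a y : J,
      ((p * B ((1 - p) * x) ((1 - p) * x)) * a) * y
        - (y * a) * (p * B ((1 - p) * x) ((1 - p) * x)) = 0 := by
  -- halving lemma (char ≠ 2)
  have halve : ∀ z : J, z + z = 0 → z = 0 := by
    intro z hz
    have h2z : (2 : K) • z = 0 := by rw [two_smul]; exact hz
    calc z = (2:K)⁻¹ • ((2:K) • z) := (inv_smul_smul₀ h2 z).symm
      _ = 0 := by rw [h2z, smul_zero]
  -- multiplication by p is a centroid element
  have hpl : ∀ b c : J, (p * b) * c = p * (b * c) := by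
    intro b c
    have h := hpc b c
    rw [sub_eq_zero] at h
    rw [h, hcomm, hcomm c b]
  have hpq : p * (1 - p) = 0 := by rw [mul_sub, mul_one, hp, sub_self]
  have hqp : (1 - p) * p = 0 := by rw [sub_mul, one_mul, hp, sub_self]
  have hpu : ∀ v : J, p * ((1 - p) * v) = 0 := by
    intro v; rw [← hpl, hpq, zero_mul]
  have hql : ∀ b c : J, ((1 - p) * b) * c = (1 - p) * (b * c) := by
    intro b c
    simp only [sub_mul, one_mul, hpl]
  have hkey : ∀ t a v : J, ((p * t) * a) * ((1 - p) * v) = 0 := by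
    intro t a v
    rw [hpl, hcomm, hql, hcomm v, hpl, ← hql, hqp, zero_mul]
  -- full linearization of hB
  have hG2 : ∀ x y a : J,
      (((B x x * a) * y - (y * a) * B x x) + ((B x y * a) * x - (x * a) * B x y)
        + ((B y x * a) * x - (x * a) * B y x))
      + (((B x x * a) * y - (y * a) * B x x) + ((B x y * a) * x - (x * a) * B x y)
        + ((B y x * a) * x - (x * a) * B y x)) = 0 := by
    intro x y a
    have e1 := hB (x + y) a
    have e2 := hB (x - y) a
    have e3 := hB y a
    have expand :
        (((B x x * a) * y - (y * a) * B x x) + ((B x y * a) * x - (x * a) * B x y)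
          + ((B y x * a) * x - (x * a) * B y x))
        + (((B x x * a) * y - (y * a) * B x x) + ((B x y * a) * x - (x * a) * B x y)
          + ((B y x * a) * x - (x * a) * B y x))
        = ((B (x+y) (x+y) * a) * (x+y) - ((x+y) * a) * B (x+y) (x+y))
          - ((B (x-y) (x-y) * a) * (x-y) - ((x-y) * a) * B (x-y) (x-y))
          - (((B y y * a) * y - (y * a) * B y y) + ((B y y * a) * y - (y * a) * B y y)) := by
      simp only [map_add, map_sub, LinearMap.add_apply, LinearMap.sub_apply,
        add_mul, mul_add, sub_mul, mul_sub]
      abel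
    rw [expand, e1, e2, e3]
    simp
  have hG : ∀ x y a : J,
      (((B x x * a) * y - (y * a) * B x x) + ((B x y * a) * x - (x * a) * B x y)
        + ((B y x * a) * x - (x * a) * B y x)) = 0 :=
    fun x y a => halve _ (hG2 x y a)
  -- main proof
  intro x a y
  set u := (1 - p) * x with hu
  have g1 : ((p * B u u) * a) * y = p * ((B u u * a) * y) := by rw [hpl, hpl]
  have g2 : (y * a) * (p * B u u) = p * ((y * a) * B u u) := by
    rw [hcomm, hpl, hcomm (B u u)]
  rw [g1, g2, ← mul_sub]
  have h := hG u y a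
  have hrw : (B u u * a) * y - (y * a) * B u u
      = -(((B u y * a) * u - (u * a) * B u y) + ((B y u * a) * u - (u * a) * B y u)) := by
    refine eq_neg_of_add_eq_zero_left ?_
    rw [← add_assoc]; exact h
  rw [hrw, mul_neg, neg_eq_zero, mul_add]
  have z1 : ∀ c : J, p * ((c * a) * u - (u * a) * c) = 0 := by
    intro c
    have t1 : p * ((c * a) * u) = 0 := by
      rw [← hpl, ← hpl, hu]; exact hkey c a x
    have t2 : p * ((u * a) * c) = 0 := by
      rw [← hpl, ← hpl, hu, hpu, zero_mul, zero_mul]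
    rw [mul_sub, t1, t2, sub_zero]
  rw [z1 (B u y), z1 (B y u), add_zero]
end

section
/- Let V be a complex inner product space with conjugation a ↦ ā and unit vector 𝟏 as in the spin factor model, with product a∘b = ⟨a|𝟏⟩b + ⟨b|𝟏⟩a − ⟨a|b̄⟩𝟏. Suppose λ𝟏 + a and μ𝟏 + b, with a, b ⟂ 𝟏, operator commute, i.e. ((λ𝟏+a)∘c)∘(μ𝟏+b) = (λ𝟏+a)∘(c∘(μ𝟏+b)) for all c ∈ V. If there exists c ⟂ 𝟏 with ⟨a|c̄⟩ ≠ 0 (in particular if a ≠ 0 and the conjugation preserves the orthogonal complement of 𝟏 and the pairing (a,c) ↦ ⟨a|c̄⟩ is nondegenerate on 𝟏^⟂), then b ∈ ℂ·a, and hence μ𝟏 + b lies in the linear span of 𝟏 and λ𝟏 + a. -/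
/-! For `c ⟂ 𝟏` with `c̄ ⟂ 𝟏`, the scalar parts of `x = λ𝟏 + a` and `y = μ𝟏 + b` cancel from the
associator, while `a ∘ c = -⟨a|c̄⟩𝟏` and `c ∘ b = -⟨c|b̄⟩𝟏` are scalar multiples of the unit.
Hence `(x ∘ c) ∘ y - x ∘ (c ∘ y) = ⟨c|b̄⟩a - ⟨a|c̄⟩b`, and operator commutation forces
`⟨a|c̄⟩b = ⟨c|b̄⟩a`; a `c` with `⟨a|c̄⟩ ≠ 0` then exhibits `b` as a multiple of `a`. -/

/-- The spin factor product a∘b = ⟨a|𝟏⟩b + ⟨b|𝟏⟩a − ⟨a|b̄⟩𝟏, where ⟨·|·⟩ is linear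
in the first variable (so ⟨a|b⟩ = inner b a in Mathlib's convention). -/
noncomputable def spinMul {V : Type*} [NormedAddCommGroup V] [InnerProductSpace ℂ V]
    (cj : V → V) (one : V) (a b : V) : V :=
  (inner ℂ one a : ℂ) • b + (inner ℂ one b : ℂ) • a - (inner ℂ (cj b) a : ℂ) • one

namespace SpinFactor

variable {V : Type*} [NormedAddCommGroup V] [InnerProductSpace ℂ V] (cj : V → V) (one : V)

theorem spinMul_add_left (x y z : V) :
    spinMul cj one (x + y) z = spinMul cj one x z + spinMul cj one y z := by
  simp only [spinMul, inner_add_right]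
  module

theorem spinMul_sub_left (x y z : V) :
    spinMul cj one (x - y) z = spinMul cj one x z - spinMul cj one y z := by
  simp only [spinMul, inner_sub_right]
  module

theorem spinMul_smul_left (t : ℂ) (x z : V) :
    spinMul cj one (t • x) z = t • spinMul cj one x z := by
  simp only [spinMul, inner_smul_right]
  module

theorem spinMul_add_right (hadd : ∀ a b : V, cj (a + b) = cj a + cj b) (x y z : V) :
    spinMul cj one x (y + z) = spinMul cj one x y + spinMul cj one x z := by
  simp only [spinMul, hadd, inner_add_left, inner_add_right]
  module

theorem spinMul_sub_right (hadd : ∀ a b : V, cj (a + b) = cj a + cj b) (x y z : V) :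
    spinMul cj one x (y - z) = spinMul cj one x y - spinMul cj one x z := by
  have hsub : cj (y - z) = cj y - cj z := map_sub (AddMonoidHom.mk' cj hadd) y z
  simp only [spinMul, hsub, inner_sub_left, inner_sub_right]
  module

theorem spinMul_smul_right (hsmul : ∀ (c : ℂ) (a : V), cj (c • a) = (starRingEnd ℂ c) • cj a)
    (t : ℂ) (x z : V) : spinMul cj one x (t • z) = t • spinMul cj one x z := by
  simp only [spinMul, hsmul, inner_smul_left, inner_smul_right, Complex.conj_conj]
  module

theorem spinMul_one_right (hone : cj one = one) (honen : inner ℂ one one = 1) (x : V) :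
    spinMul cj one x one = x := by
  simp only [spinMul, hone, honen]
  module

theorem spinMul_one_left (honen : inner ℂ one one = 1) {z : V} (hz : inner ℂ one z = 0)
    (hz' : inner ℂ one (cj z) = 0) : spinMul cj one one z = z := by
  simp only [spinMul, honen, hz, inner_eq_zero_symm.mp hz']
  module

theorem spinMul_of_inner_one_eq_zero {x y : V} (hx : inner ℂ one x = 0) (hy : inner ℂ one y = 0) :
    spinMul cj one x y = -(inner ℂ (cj y) x) • one := by
  simp only [spinMul, hx, hy]
  module

theorem inner_cj_smul_eq_of_spinMul_assoc (hadd : ∀ a b : V, cj (a + b) = cj a + cj b)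
    (hsmul : ∀ (c : ℂ) (a : V), cj (c • a) = (starRingEnd ℂ c) • cj a)
    (hone : cj one = one) (honen : inner ℂ one one = 1) {lam mu : ℂ} {a b c : V}
    (ha : inner ℂ one a = 0) (hb : inner ℂ one b = 0) (hb' : inner ℂ one (cj b) = 0)
    (hc : inner ℂ one c = 0) (hc' : inner ℂ one (cj c) = 0)
    (h : spinMul cj one (spinMul cj one (lam • one + a) c) (mu • one + b)
        = spinMul cj one (lam • one + a) (spinMul cj one c (mu • one + b))) :
    inner ℂ (cj c) a • b = inner ℂ (cj b) c • a := by
  set α := inner ℂ (cj c) a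
  set β := inner ℂ (cj b) c
  have hxc : spinMul cj one (lam • one + a) c = lam • c - α • one := by
    rw [spinMul_add_left, spinMul_smul_left, spinMul_one_left cj one honen hc hc',
      spinMul_of_inner_one_eq_zero cj one ha hc, neg_smul, ← sub_eq_add_neg]
  have hcy : spinMul cj one c (mu • one + b) = mu • c - β • one := by
    rw [spinMul_add_right cj one hadd, spinMul_smul_right cj one hsmul,
      spinMul_one_right cj one hone honen, spinMul_of_inner_one_eq_zero cj one hc hb, neg_smul,
      ← sub_eq_add_neg]
  have hlhs : spinMul cj one (lam • c - α • one) (mu • one + b)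
      = (lam * mu) • c - (lam * β + mu * α) • one - α • b := by
    simp only [spinMul_sub_left, spinMul_smul_left, spinMul_add_right cj one hadd,
      spinMul_smul_right cj one hsmul, spinMul_one_right cj one hone honen,
      spinMul_one_left cj one honen hb hb', spinMul_of_inner_one_eq_zero cj one hc hb]
    module
  have hrhs : spinMul cj one (lam • one + a) (mu • c - β • one)
      = (lam * mu) • c - (lam * β + mu * α) • one - β • a := by
    simp only [spinMul_sub_right cj one hadd, spinMul_smul_right cj one hsmul, spinMul_add_left,
      spinMul_smul_left, spinMul_one_right cj one hone honen,
      spinMul_one_left cj one honen hc hc', spinMul_of_inner_one_eq_zero cj one ha hc]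
    module
  rw [hxc, hcy, hlhs, hrhs] at h
  linear_combination (norm := module) -h

theorem add_smul_mem_span_pair (lam mu t : ℂ) (a : V) :
    mu • one + t • a ∈ Submodule.span ℂ ({one, lam • one + a} : Set V) :=
  Submodule.mem_span_pair.mpr ⟨mu - t * lam, t, by module⟩

end SpinFactor

open SpinFactor

theorem spin_operator_commute_linear_dependence_general {V : Type*} [NormedAddCommGroup V]
    [InnerProductSpace ℂ V]
    (cj : V → V) (one : V)
    (hadd : ∀ a b : V, cj (a + b) = cj a + cj b)
    (hsmul : ∀ (c : ℂ) (a : V), cj (c • a) = (starRingEnd ℂ c) • cj a)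
    (hone : cj one = one) (honen : (inner ℂ one one : ℂ) = 1)
    (hperp : ∀ c : V, (inner ℂ one c : ℂ) = 0 → (inner ℂ one (cj c) : ℂ) = 0)
    (lam mu : ℂ) (a b : V)
    (ha : (inner ℂ one a : ℂ) = 0) (hb : (inner ℂ one b : ℂ) = 0)
    (hcomm : ∀ c : V,
      spinMul cj one (spinMul cj one (lam • one + a) c) (mu • one + b)
        = spinMul cj one (lam • one + a) (spinMul cj one c (mu • one + b)))
    (hnd : ∃ c : V, (inner ℂ one c : ℂ) = 0 ∧ (inner ℂ (cj c) a : ℂ) ≠ 0) :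
    (∃ t : ℂ, b = t • a) ∧
      (mu • one + b) ∈ Submodule.span ℂ ({one, lam • one + a} : Set V) := by
  obtain ⟨c, hc, hca⟩ := hnd
  have hcoef := inner_cj_smul_eq_of_spinMul_assoc cj one hadd hsmul hone honen ha hb (hperp b hb) hc
    (hperp c hc) (hcomm c)
  have hba : b = ((inner ℂ (cj c) a)⁻¹ * inner ℂ (cj b) c) • a := by
    rw [mul_smul, ← hcoef, inv_smul_smul₀ hca]
  exact ⟨⟨_, hba⟩, hba ▸ add_smul_mem_span_pair one lam mu _ a⟩

/-- If λ𝟏 + a and μ𝟏 + b (with a, b ⟂ 𝟏) operator commute in the spin factor, and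
there exists c ⟂ 𝟏 with ⟨a|c̄⟩ ≠ 0, then b ∈ ℂ·a and μ𝟏 + b ∈ span{𝟏, λ𝟏 + a}. -/
theorem spin_operator_commute_linear_dependence {V : Type*} [NormedAddCommGroup V]
    [InnerProductSpace ℂ V]
    (cj : V → V) (one : V)
    (hadd : ∀ a b : V, cj (a + b) = cj a + cj b)
    (hsmul : ∀ (c : ℂ) (a : V), cj (c • a) = (starRingEnd ℂ c) • cj a)
    (hinv : ∀ a : V, cj (cj a) = a)
    (hinner : ∀ a b : V, (inner ℂ (cj a) (cj b) : ℂ) = starRingEnd ℂ (inner ℂ a b : ℂ))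
    (hone : cj one = one) (honen : (inner ℂ one one : ℂ) = 1)
    (hperp : ∀ c : V, (inner ℂ one c : ℂ) = 0 → (inner ℂ one (cj c) : ℂ) = 0)
    (lam mu : ℂ) (a b : V)
    (ha : (inner ℂ one a : ℂ) = 0) (hb : (inner ℂ one b : ℂ) = 0)
    (hcomm : ∀ c : V,
      spinMul cj one (spinMul cj one (lam • one + a) c) (mu • one + b)
        = spinMul cj one (lam • one + a) (spinMul cj one c (mu • one + b)))
    (hnd : ∃ c : V, (inner ℂ one c : ℂ) = 0 ∧ (inner ℂ (cj c) a : ℂ) ≠ 0) :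
    (∃ t : ℂ, b = t • a) ∧
      (mu • one + b) ∈ Submodule.span ℂ ({one, lam • one + a} : Set V) :=
  spin_operator_commute_linear_dependence_general cj one hadd hsmul hone honen hperp lam mu a b ha
    hb hcomm hnd
end

section
/- Let J and M be unital Jordan algebras over ℂ, let π : J → M be a unital Jordan homomorphism, and suppose there exist w ∈ J and linear maps E₀, E₁, E₂ : J → J that are elementary operators satisfying E_i(w^j) = δ_{ij}·1 for i, j ∈ {0,1,2}, together with induced elementary operators Ê_i on M with Ê_i ∘ π = π ∘ E_i. Suppose λ, λ' are central elements of M, μ, μ' : J → Z(M) are linear maps, and ν, ν' : J × J → Z(M) are symmetric bilinear maps with λ∘π(x)² + μ(x)∘π(x) + ν(x,x) = λ'∘π(x)² + μ'(x)∘π(x) + ν'(x,x) for all x ∈ J. Then λ = λ', μ = μ' and ν = ν'. In particular λ = Ê₂(λ∘π(w)² + μ(w)∘π(w) + ν(w,w)). -/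
/-- An element z of a (Jordan) algebra is central if the associator [z, a, b] vanishes. -/
def IsCentralElem {M : Type*} [Mul M] (z : M) : Prop :=
  ∀ a b : M, (z * a) * b = (b * a) * z

/-- Uniqueness of the standard representation
B(x,x) = λ∘π(x)² + μ(x)∘π(x) + ν(x,x) of a quadratic form relative to a unital Jordan
homomorphism π : J → M, given an element w and elementary operators E_i on J with
E_i(w^j) = δ_{ij}·1 and induced elementary operators F_i on M with F_i ∘ π = π ∘ E_i.
In particular λ = F₂(λ∘π(w)² + μ(w)∘π(w) + ν(w,w)). -/
theorem standard_representation_unique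
    {J M : Type*}
    [NonAssocRing J] [Module ℂ J] [IsScalarTower ℂ J J] [SMulCommClass ℂ J J]
    [NonAssocRing M] [Module ℂ M] [IsScalarTower ℂ M M] [SMulCommClass ℂ M M]
    (hcommJ : ∀ x y : J, x * y = y * x) (hcommM : ∀ x y : M, x * y = y * x)
    (π : J →ₗ[ℂ] M) (hπ1 : π 1 = 1) (hπmul : ∀ x y : J, π (x * y) = π x * π y)
    (w : J) (E₀ E₁ E₂ : Module.End ℂ J)
    (hE₀mem : E₀ ∈ NonUnitalAlgebra.adjoin ℂ
        (Set.range fun a : J => (LinearMap.mulLeft ℂ a : Module.End ℂ J)))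
    (hE₁mem : E₁ ∈ NonUnitalAlgebra.adjoin ℂ
        (Set.range fun a : J => (LinearMap.mulLeft ℂ a : Module.End ℂ J)))
    (hE₂mem : E₂ ∈ NonUnitalAlgebra.adjoin ℂ
        (Set.range fun a : J => (LinearMap.mulLeft ℂ a : Module.End ℂ J)))
    (hE₀ : E₀ 1 = 1 ∧ E₀ w = 0 ∧ E₀ (w * w) = 0)
    (hE₁ : E₁ 1 = 0 ∧ E₁ w = 1 ∧ E₁ (w * w) = 0)
    (hE₂ : E₂ 1 = 0 ∧ E₂ w = 0 ∧ E₂ (w * w) = 1)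
    (F₀ F₁ F₂ : Module.End ℂ M)
    (hF₀mem : F₀ ∈ NonUnitalAlgebra.adjoin ℂ
        (Set.range fun a : M => (LinearMap.mulLeft ℂ a : Module.End ℂ M)))
    (hF₁mem : F₁ ∈ NonUnitalAlgebra.adjoin ℂ
        (Set.range fun a : M => (LinearMap.mulLeft ℂ a : Module.End ℂ M)))
    (hF₂mem : F₂ ∈ NonUnitalAlgebra.adjoin ℂ
        (Set.range fun a : M => (LinearMap.mulLeft ℂ a : Module.End ℂ M)))
    (hint₀ : F₀ ∘ₗ π = π ∘ₗ E₀) (hint₁ : F₁ ∘ₗ π = π ∘ₗ E₁)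
    (hint₂ : F₂ ∘ₗ π = π ∘ₗ E₂)
    (hFZ : ∀ F ∈ ({F₀, F₁, F₂} : Set (Module.End ℂ M)),
        ∀ z x : M, IsCentralElem z → F (z * x) = z * F x)
    (lam lam' : M) (hlam : IsCentralElem lam) (hlam' : IsCentralElem lam')
    (μ μ' : J →ₗ[ℂ] M)
    (hμ : ∀ x : J, IsCentralElem (μ x)) (hμ' : ∀ x : J, IsCentralElem (μ' x))
    (ν ν' : J →ₗ[ℂ] J →ₗ[ℂ] M)
    (hνs : ∀ x y : J, ν x y = ν y x) (hν's : ∀ x y : J, ν' x y = ν' y x)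
    (hν : ∀ x y : J, IsCentralElem (ν x y)) (hν' : ∀ x y : J, IsCentralElem (ν' x y))
    (heq : ∀ x : J,
        lam * (π x * π x) + μ x * π x + ν x x
          = lam' * (π x * π x) + μ' x * π x + ν' x x) :
    lam = lam' ∧ μ = μ' ∧ ν = ν' ∧
      lam = F₂ (lam * (π w * π w) + μ w * π w + ν w w) := by

  -- abbreviations for interchange identities
  have key : ∀ (F : Module.End ℂ M) (E : Module.End ℂ J),
      F ∈ ({F₀, F₁, F₂} : Set (Module.End ℂ M)) → F ∘ₗ π = π ∘ₗ E →
      ∀ (z : M), IsCentralElem z → ∀ x : J, F (z * π x) = z * π (E x) := by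
    intro F E hF hFE z hz x
    rw [hFZ F hF z (π x) hz]
    have : F (π x) = π (E x) := LinearMap.congr_fun hFE x
    rw [this]
  have keyz : ∀ (F : Module.End ℂ M) (E : Module.End ℂ J),
      F ∈ ({F₀, F₁, F₂} : Set (Module.End ℂ M)) → F ∘ₗ π = π ∘ₗ E →
      ∀ (z : M), IsCentralElem z → F z = z * π (E 1) := by
    intro F E hF hFE z hz
    have := key F E hF hFE z hz 1
    rwa [hπ1, mul_one] at this
  -- general computation of F applied to a standard expression
  have hT : ∀ (F : Module.End ℂ M) (E : Module.End ℂ J),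
      F ∈ ({F₀, F₁, F₂} : Set (Module.End ℂ M)) → F ∘ₗ π = π ∘ₗ E →
      ∀ (l : M), IsCentralElem l → ∀ (μ0 : J →ₗ[ℂ] M), (∀ x, IsCentralElem (μ0 x)) →
      ∀ (ν0 : J →ₗ[ℂ] J →ₗ[ℂ] M), (∀ x y, IsCentralElem (ν0 x y)) →
      ∀ x : J, F (l * (π x * π x) + μ0 x * π x + ν0 x x)
        = l * π (E (x * x)) + μ0 x * π (E x) + ν0 x x * π (E 1) := by
    intro F E hF hFE l hl μ0 hμ0 ν0 hν0 x
    rw [map_add, map_add, ← hπmul x x, key F E hF hFE l hl,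
      key F E hF hFE (μ0 x) (hμ0 x), keyz F E hF hFE (ν0 x x) (hν0 x x)]
  have memF₀ : F₀ ∈ ({F₀, F₁, F₂} : Set (Module.End ℂ M)) := by simp
  have memF₁ : F₁ ∈ ({F₀, F₁, F₂} : Set (Module.End ℂ M)) := by simp
  have memF₂ : F₂ ∈ ({F₀, F₁, F₂} : Set (Module.End ℂ M)) := by simp
  -- last claim and lam = lam'
  have hF₂w : F₂ (lam * (π w * π w) + μ w * π w + ν w w) = lam := by
    rw [hT F₂ E₂ memF₂ hint₂ lam hlam μ hμ ν hν w, hE₂.2.2, hE₂.2.1, hE₂.1, hπ1,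
      map_zero, mul_one, mul_zero, mul_zero, add_zero, add_zero]
  have hF₂w' : F₂ (lam' * (π w * π w) + μ' w * π w + ν' w w) = lam' := by
    rw [hT F₂ E₂ memF₂ hint₂ lam' hlam' μ' hμ' ν' hν' w, hE₂.2.2, hE₂.2.1, hE₂.1, hπ1,
      map_zero, mul_one, mul_zero, mul_zero, add_zero, add_zero]
  have hlam_eq : lam = lam' := by
    rw [← hF₂w, ← hF₂w', heq w]
  -- μ w = μ' w
  have hμw : μ w = μ' w := by
    have h1 : F₁ (lam * (π w * π w) + μ w * π w + ν w w) = μ w := by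
      rw [hT F₁ E₁ memF₁ hint₁ lam hlam μ hμ ν hν w, hE₁.2.2, hE₁.2.1, hE₁.1, hπ1,
        map_zero, mul_one, mul_zero, mul_zero, add_zero, zero_add]
    have h2 : F₁ (lam' * (π w * π w) + μ' w * π w + ν' w w) = μ' w := by
      rw [hT F₁ E₁ memF₁ hint₁ lam' hlam' μ' hμ' ν' hν' w, hE₁.2.2, hE₁.2.1, hE₁.1, hπ1,
        map_zero, mul_one, mul_zero, mul_zero, add_zero, zero_add]
    rw [← h1, ← h2, heq w]
  -- cancel the lam term
  have heq2 : ∀ x : J, μ x * π x + ν x x = μ' x * π x + ν' x x := by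
    intro x
    have h := heq x
    rw [hlam_eq, add_assoc, add_assoc] at h
    exact add_left_cancel h
  -- polarization
  have expand : ∀ (μ0 : J →ₗ[ℂ] M) (ν0 : J →ₗ[ℂ] J →ₗ[ℂ] M) (x y : J),
      μ0 x * π y + μ0 y * π x + (ν0 x y + ν0 y x)
        = (μ0 (x + y) * π (x + y) + ν0 (x + y) (x + y)) - (μ0 x * π x + ν0 x x)
          - (μ0 y * π y + ν0 y y) := by
    intro μ0 ν0 x y
    simp only [map_add, LinearMap.add_apply, add_mul, mul_add]
    abel
  have pol : ∀ x y : J, μ x * π y + μ y * π x + (ν x y + ν y x)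
      = μ' x * π y + μ' y * π x + (ν' x y + ν' y x) := by
    intro x y
    rw [expand μ ν x y, expand μ' ν' x y, heq2, heq2, heq2]
  -- μ = μ'
  have hμeq : μ = μ' := by
    ext x
    have h := congrArg F₁ (pol x w)
    have hc : ∀ (μ0 : J →ₗ[ℂ] M), (∀ t, IsCentralElem (μ0 t)) →
        ∀ (ν0 : J →ₗ[ℂ] J →ₗ[ℂ] M), (∀ s t, IsCentralElem (ν0 s t)) →
        F₁ (μ0 x * π w + μ0 w * π x + (ν0 x w + ν0 w x))
          = μ0 x + μ0 w * π (E₁ x) := by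
      intro μ0 hμ0 ν0 hν0
      rw [map_add, map_add, map_add, key F₁ E₁ memF₁ hint₁ (μ0 x) (hμ0 x) w,
        key F₁ E₁ memF₁ hint₁ (μ0 w) (hμ0 w) x,
        keyz F₁ E₁ memF₁ hint₁ (ν0 x w) (hν0 x w),
        keyz F₁ E₁ memF₁ hint₁ (ν0 w x) (hν0 w x), hE₁.2.1, hE₁.1, hπ1,
        map_zero, mul_one, mul_zero, mul_zero, add_zero, add_zero]
    rw [hc μ hμ ν hν, hc μ' hμ' ν' hν', hμw] at h
    exact add_right_cancel h
  -- ν = ν'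
  have hνeq : ν = ν' := by
    have heq3 : ∀ x : J, ν x x = ν' x x := by
      intro x
      have h := heq2 x
      rw [hμeq] at h
      exact add_left_cancel h
    ext x y
    have h := pol x y
    rw [hμeq, hνs y x, hν's y x] at h
    have h2 : ν x y + ν x y = ν' x y + ν' x y := add_left_cancel h
    have h3 : (2 : ℂ) • ν x y = (2 : ℂ) • ν' x y := by
      rw [two_smul, two_smul]; exact h2
    calc ν x y = ((2 : ℂ)⁻¹ * 2) • ν x y := by norm_num
    _ = (2 : ℂ)⁻¹ • ((2 : ℂ) • ν x y) := by rw [mul_smul]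
    _ = (2 : ℂ)⁻¹ • ((2 : ℂ) • ν' x y) := by rw [h3]
    _ = ((2 : ℂ)⁻¹ * 2) • ν' x y := by rw [mul_smul]
    _ = ν' x y := by norm_num
  exact ⟨hlam_eq, hμeq, hνeq, hF₂w.symm⟩
end

section
/- Let V and W be ℂ-vector spaces, let π : V → W be linear, fix a vector e ∈ W, and let T : V → W be a linear map such that for every x ∈ V there exist scalars α_x, β_x ∈ ℂ with T(x) = α_x π(x) + β_x e. Assume: (i) there is u ∈ V such that π(u) and e are linearly independent; (ii) for every x ∈ V with π(x) ∈ span{e, π(u)} there exists z ∈ V with π(z) ∉ span{e, π(u)}. Then there exist a single scalar λ ∈ ℂ and a linear functional μ : V → ℂ such that T(x) = λ π(x) + μ(x) e for all x ∈ V. -/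
/-- If T(x) ∈ span{π(x), e} pointwise, π(u) and e are linearly independent, and
whenever π(x) ∈ span{e, π(u)} there is z with π(z) ∉ span{e, π(u)}, then the pointwise
scalars can be chosen uniformly: T(x) = λπ(x) + μ(x)e with λ a scalar and μ linear. -/
theorem pointwise_span_upgrade {V W : Type*} [AddCommGroup V] [Module ℂ V]
    [AddCommGroup W] [Module ℂ W]
    (π T : V →ₗ[ℂ] W) (e : W)
    (h : ∀ x : V, ∃ α β : ℂ, T x = α • π x + β • e)
    (u : V) (hind : LinearIndependent ℂ ![π u, e])
    (hrich : ∀ x : V, π x ∈ Submodule.span ℂ ({e, π u} : Set W) →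
        ∃ z : V, π z ∉ Submodule.span ℂ ({e, π u} : Set W)) :
    ∃ (lam : ℂ) (mu : V →ₗ[ℂ] ℂ), ∀ x : V, T x = lam • π x + mu x • e := by
  classical
  obtain ⟨lam, bu, hu⟩ := h u
  have hpair : ∀ s t : ℂ, s • π u + t • e = 0 → s = 0 ∧ t = 0 := by
    intro s t hst
    exact LinearIndependent.pair_iff.mp hind s t hst
  have he : e ≠ 0 := by
    intro h0
    exact one_ne_zero (hpair 0 1 (by simp [h0])).2
  have hu_span : π u ∉ Submodule.span ℂ ({e} : Set W) := by
    rw [Submodule.mem_span_singleton]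
    rintro ⟨s, hs⟩
    have h1 : (1 : ℂ) • π u + (-s) • e = 0 := by
      rw [one_smul, neg_smul, ← hs]; abel
    exact one_ne_zero (hpair 1 (-s) h1).1
  obtain ⟨z, hz⟩ := hrich 0 (by rw [map_zero]; exact Submodule.zero_mem _)
  -- key step lemma: uniform coefficient across "generic" pairs
  have step : ∀ x y : V, π x ∉ Submodule.span ℂ ({e} : Set W) →
      π y ∉ Submodule.span ℂ ({e, π x} : Set W) →
      ∀ a b a' b' : ℂ, T x = a • π x + b • e → T y = a' • π y + b' • e → a = a' := by
    intro x y hx hy a b a' b' hTx hTy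
    obtain ⟨c, d, hc⟩ := h (x + y)
    rw [map_add, map_add, hTx, hTy] at hc
    have key : (a' - c) • π y = (c - a) • π x + (d - b - b') • e := by
      linear_combination (norm := module) hc
    have hac : a' = c := by
      by_contra hne
      apply hy
      rw [Submodule.mem_span_pair]
      refine ⟨(a' - c)⁻¹ * (d - b - b'), (a' - c)⁻¹ * (c - a), ?_⟩
      have h2 : π y = (a' - c)⁻¹ • ((a' - c) • π y) := by
        rw [smul_smul, inv_mul_cancel₀ (sub_ne_zero.mpr hne), one_smul]
      rw [key] at h2
      rw [h2]
      module
    have hzero : (c - a) • π x + (d - b - b') • e = 0 := by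
      rw [← key, hac, sub_self, zero_smul]
    have hca : c = a := by
      by_contra hne
      apply hx
      rw [Submodule.mem_span_singleton]
      refine ⟨(c - a)⁻¹ * (b + b' - d), ?_⟩
      have h2 : π x = (c - a)⁻¹ • ((c - a) • π x) := by
        rw [smul_smul, inv_mul_cancel₀ (sub_ne_zero.mpr hne), one_smul]
      have h3 : (c - a) • π x = (b + b' - d) • e := by
        linear_combination (norm := module) hzero
      rw [h3, smul_smul] at h2
      rw [← h2]
    rw [hac, hca]
  -- uniform coefficient for all x with π x outside span{e}
  have main : ∀ x : V, π x ∉ Submodule.span ℂ ({e} : Set W) →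
      ∃ b : ℂ, T x = lam • π x + b • e := by
    intro x hx
    obtain ⟨a, b, hTx⟩ := h x
    suffices hal : a = lam by exact ⟨b, by rw [hTx, hal]⟩
    by_cases hcase : π u ∈ Submodule.span ℂ ({e, π x} : Set W)
    · -- span{e, π x} = span{e, π u}; use z outside it
      have hxmem : π x ∈ Submodule.span ℂ ({e, π u} : Set W) := by
        rw [Submodule.mem_span_pair] at hcase ⊢
        obtain ⟨s, t, hst⟩ := hcase
        have ht : t ≠ 0 := by
          intro ht0
          exact hu_span (Submodule.mem_span_singleton.mpr
            ⟨s, by simpa [ht0] using hst⟩)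
        refine ⟨-(t⁻¹ * s), t⁻¹, ?_⟩
        have h2 : π x = t⁻¹ • (t • π x) := by
          rw [smul_smul, inv_mul_cancel₀ ht, one_smul]
        have h3 : t • π x = π u - s • e := by
          linear_combination (norm := module) hst
        rw [h3] at h2
        rw [h2]
        module
      have hxz : π z ∉ Submodule.span ℂ ({e, π x} : Set W) := by
        intro hmem
        apply hz
        have hsub : Submodule.span ℂ ({e, π x} : Set W) ≤
            Submodule.span ℂ ({e, π u} : Set W) := by
          apply Submodule.span_le.mpr
          rintro w (rfl | rfl)
          · exact Submodule.subset_span (Set.mem_insert _ _)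
          · exact hxmem
        exact hsub hmem
      obtain ⟨az, bz, hTz⟩ := h z
      have h1 : a = az := step x z hx hxz a b az bz hTx hTz
      have h2 : lam = az := step u z hu_span hz lam bu az bz hu hTz
      rw [h1, h2]
    · exact step x u hx hcase a b lam bu hTx hu
  -- extend to all x
  have main2 : ∀ x : V, ∃ b : ℂ, T x = lam • π x + b • e := by
    intro x
    by_cases hx : π x ∈ Submodule.span ℂ ({e} : Set W)
    · obtain ⟨s, hs⟩ := Submodule.mem_span_singleton.mp hx
      obtain ⟨a, b, hTx⟩ := h x
      refine ⟨a * s + b - lam * s, ?_⟩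
      rw [hTx, ← hs]
      module
    · exact main x hx
  -- build μ
  set S : V →ₗ[ℂ] W := T - lam • π with hSdef
  have hS : ∀ x, S x ∈ Submodule.span ℂ ({e} : Set W) := by
    intro x
    obtain ⟨b, hb⟩ := main2 x
    have hSx : S x = b • e := by
      simp only [hSdef, LinearMap.sub_apply, LinearMap.smul_apply, hb]
      abel
    rw [hSx]
    exact Submodule.smul_mem _ _ (Submodule.mem_span_singleton_self e)
  let S' := S.codRestrict (Submodule.span ℂ ({e} : Set W)) hS
  refine ⟨lam, (LinearEquiv.coord ℂ W e he).toLinearMap ∘ₗ S', fun x => ?_⟩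
  have hcoord : (LinearEquiv.coord ℂ W e he) (S' x) • e = (S' x : W) :=
    LinearEquiv.coord_apply_smul ℂ W e he (S' x)
  have hS'x : ((S' x : W)) = T x - lam • π x := rfl
  simp only [LinearMap.comp_apply, LinearEquiv.coe_coe]
  rw [hcoord, hS'x]
  abel
end
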